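/- Let a, r, k_min, k_max be positive reals with k_min < k_max, and let x₊ denote the larger of the two positive roots of the quadratic (a/k_max)·X² − (r/k_min + a)·X + r. If y : [0, b) → ℝ is a C¹ function satisfying y′(t) = (a/k_max)·y(t)³ − (r/k_min + a)·y(t)² + r·y(t) for all t ∈ [0, b) with y(0) > x₊, then y blows up in finite time: there is no such solution defined on all of [0, ∞), and on the maximal interval of existence [0, T*) one has T* < ∞ and y(t) → +∞ as t → T*⁻. -/

import Mathlib

/-!
With `c = a / k_max`, factoring the quadratic through its roots `x₋ ≤ x₊` gives, for
`x ≥ y(0) > x₊ > 0`,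
`f(x) = c·x·(x - x₊)(x - x₋) ≥ c·x·(x - x₊)² ≥ μ·x²`, where `μ = c·(y(0) - x₊)² / y(0) > 0`.
Since `f(y(0)) > 0`, a solution never drops below `y(0)` and is increasing, and then `1/y + μt`
is non-increasing: `0 < 1/y(t) ≤ 1/y(0) - μt`, so no solution lives past `1/(μ·y(0))`.
An increasing solution on `[0, T*)` that stayed bounded would converge at `T*`, and gluing on the
local Picard–Lindelöf solution through `(T*, lim y)` would extend it beyond `T*`; hence on a
maximal interval `y → +∞`.
-/

open Set Filter

/-- `y` is a (C¹) solution of the cubic approximate lower-estimate ODE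
`y′ = (a/k_max)·y³ − (r/k_min + a)·y² + r·y` on the set `D`. -/
def CubicSolOn (a r kmin kmax : ℝ) (y : ℝ → ℝ) (D : Set ℝ) : Prop :=
  ∀ t ∈ D, HasDerivWithinAt y
    ((a / kmax) * y t ^ 3 - (r / kmin + a) * y t ^ 2 + r * y t) D t

open Topology

namespace AutonomousODE

section Scalar

variable {f y : ℝ → ℝ} {T : ℝ}
  (hy : ∀ t ∈ Ico 0 T, HasDerivWithinAt y (f (y t)) (Ico 0 T) t)
include hy

theorem apply_zero_le_of_pos (hf : 0 < f (y 0)) : ∀ t ∈ Ico 0 T, y 0 ≤ y t := by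
  intro t ht
  have hsub : Icc 0 t ⊆ Ico 0 T := Icc_subset_Ico_right ht.2
  refine image_le_of_deriv_right_lt_deriv_boundary' continuousOn_const
    (fun x _ ↦ hasDerivWithinAt_const x _ (y 0)) le_rfl
    (fun x hx ↦ (hy x (hsub hx)).continuousWithinAt.mono hsub)
    (fun x hx ↦ (hy x (hsub (Ico_subset_Icc_self hx))).mono_of_mem_nhdsWithin
      (Ico_mem_nhdsGE_of_mem (hsub (Ico_subset_Icc_self hx))))
    (fun x _ hx ↦ hx ▸ hf) ⟨ht.1, le_rfl⟩

theorem monotoneOn_of_pos (hf : ∀ x, y 0 ≤ x → 0 < f x) : MonotoneOn y (Ico 0 T) := by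
  have hge := apply_zero_le_of_pos hy (hf _ le_rfl)
  apply monotoneOn_of_hasDerivWithinAt_nonneg (f' := fun t ↦ f (y t)) (convex_Ico 0 T)
    (fun t ht ↦ (hy t ht).continuousWithinAt) <;> rw [interior_Ico] <;> intro t ht
  · exact (hy t (Ioo_subset_Ico_self ht)).mono Ioo_subset_Ico_self
  · exact (hf _ (hge t (Ioo_subset_Ico_self ht))).le

theorem lifetime_le_of_mul_sq_le {μ : ℝ} (hμ : 0 < μ) (hy0 : 0 < y 0)
    (hf : ∀ x, y 0 ≤ x → μ * x ^ 2 ≤ f x) : T ≤ (μ * y 0)⁻¹ := by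
  have hge :=
    apply_zero_le_of_pos hy ((by positivity : 0 < μ * y 0 ^ 2).trans_le (hf _ le_rfl))
  have hpos : ∀ t ∈ Ico 0 T, 0 < y t := fun t ht ↦ hy0.trans_le (hge t ht)
  have hanti : AntitoneOn (fun t ↦ (y t)⁻¹ + μ * t) (Ico 0 T) := by
    apply antitoneOn_of_hasDerivWithinAt_nonpos (f' := fun t ↦ -f (y t) / y t ^ 2 + μ)
      (convex_Ico 0 T)
    · exact fun t ht ↦ ((hy t ht).continuousWithinAt.inv₀ (hpos t ht).ne').add
        (continuousWithinAt_id.const_mul μ)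
    all_goals rw [interior_Ico]; intro t ht
    · have hyt := (hy t (Ioo_subset_Ico_self ht)).mono Ioo_subset_Ico_self
      exact ((hyt.inv (hpos t (Ioo_subset_Ico_self ht)).ne').add
        ((hasDerivWithinAt_id t _).const_mul μ)).congr_deriv (by rw [mul_one])
    · have hyt := hpos t (Ioo_subset_Ico_self ht)
      have : μ ≤ f (y t) / y t ^ 2 :=
        (le_div_iff₀ (by positivity)).2 (hf _ (hge t (Ioo_subset_Ico_self ht)))
      rw [neg_div]
      linarith
  by_contra! hT
  have hτ : (μ * y 0)⁻¹ ∈ Ico 0 T := ⟨by positivity, hT⟩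
  have key := hanti ⟨le_rfl, hτ.1.trans_lt hT⟩ hτ hτ.1
  have hμτ : μ * (μ * y 0)⁻¹ = (y 0)⁻¹ := by field_simp
  simp only [mul_zero, add_zero, hμτ] at key
  linarith [inv_pos.2 (hpos _ hτ)]

end Scalar

/-- Glue `y` to the local solution through `(T, L)`. -/
theorem exists_extension_of_tendsto {E : Type*} [NormedAddCommGroup E] [NormedSpace ℝ E]
    [CompleteSpace E] {f : E → E} {y : ℝ → E} {T : ℝ} {L : E} (hT : 0 < T)
    (hy : ∀ t ∈ Ico 0 T, HasDerivWithinAt y (f (y t)) (Ico 0 T) t)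
    (hL : Tendsto y (𝓝[<] T) (𝓝 L)) (hf : ContDiffAt ℝ 1 f L) :
    ∃ b, T < b ∧ ∃ z : ℝ → E,
      (∀ t ∈ Ico 0 b, HasDerivWithinAt z (f (z t)) (Ico 0 b) t) ∧ EqOn z y (Ico 0 T) := by
  obtain ⟨α, hαT, ε, hε, hα⟩ :=
    hf.exists_forall_mem_closedBall_exists_eq_forall_mem_Ioo_hasDerivAt₀ T
  set z : ℝ → E := fun t ↦ if t < T then y t else α t
  have hzy : EqOn z y (Iio T) := fun t ht ↦ if_pos ht
  have hzα : EqOn z α (Ici T) := fun t ht ↦ if_neg (not_lt.2 ht)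
  have hyD : ∀ t ∈ Ioo 0 T, HasDerivAt y (f (y t)) t :=
    fun t ht ↦ (hy t (Ioo_subset_Ico_self ht)).hasDerivAt (Ico_mem_nhds ht.1 ht.2)
  have hzT : HasDerivAt z (f L) T := by
    have hleft : HasDerivWithinAt z (f L) (Iic T) T := by
      have hzD : ∀ t ∈ Ioo 0 T, HasDerivAt z (f (y t)) t := fun t ht ↦
        (hyD t ht).congr_of_eventuallyEq (eventuallyEq_of_mem (Iio_mem_nhds ht.2) hzy)
      have hzy' : z =ᶠ[𝓝[<] T] y := eventuallyEq_nhdsWithin_of_eqOn hzy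
      refine hasDerivWithinAt_Iic_of_tendsto_deriv (s := Ioo 0 T)
        (fun t ht ↦ (hzD t ht).differentiableAt.differentiableWithinAt) ?_
        (Ioo_mem_nhdsLT hT) ?_
      · rw [ContinuousWithinAt, hzα (mem_Ici.2 le_rfl), hαT]
        exact (hL.congr' hzy'.symm).mono_left (nhdsWithin_mono _ Ioo_subset_Iio_self)
      · refine ((hf.continuousAt.tendsto.comp hL).congr' ?_)
        filter_upwards [Ioo_mem_nhdsLT hT] with t ht using ((hzD t ht).deriv).symm
    have hright : HasDerivWithinAt z (f L) (Ici T) T := by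
      have := (hα T ⟨by linarith, by linarith⟩).hasDerivWithinAt (s := Ici T)
      rw [hαT] at this
      exact this.congr hzα (hzα (mem_Ici.2 le_rfl))
    simpa only [Iic_union_Ici, hasDerivWithinAt_univ] using hleft.union hright
  refine ⟨T + ε, by linarith, z, fun t ht ↦ ?_, hzy.mono fun t ht ↦ ht.2⟩
  rcases lt_trichotomy t T with htT | rfl | htT
  · rw [hzy htT]
    have hyz := (hy t ⟨ht.1, htT⟩).congr (hzy.mono fun s hs ↦ hs.2) (hzy htT)
    exact hyz.mono_of_mem_nhdsWithin
      (mem_nhdsWithin.2 ⟨Iio T, isOpen_Iio, htT, fun s hs ↦ ⟨hs.2.1, hs.1⟩⟩)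
  · rw [hzα (mem_Ici.2 le_rfl), hαT]
    exact hzT.hasDerivWithinAt
  · rw [hzα htT.le]
    have hzα' : z =ᶠ[𝓝 t] α :=
      eventuallyEq_of_mem (Ioi_mem_nhds htT) fun s hs ↦ hzα (mem_Ici.2 (le_of_lt hs))
    exact ((hα t ⟨by linarith, ht.2⟩).congr_of_eventuallyEq hzα').hasDerivWithinAt

end AutonomousODE

theorem MonotoneOn.tendsto_nhdsLT_atTop_of_not_bddAbove {α β : Type*} [LinearOrder α]
    [TopologicalSpace α] [OrderTopology α] [LinearOrder β] {f : α → β} {a b : α}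
    (hf : MonotoneOn f (Ioo a b)) (h : ¬ BddAbove (f '' Ioo a b)) :
    Tendsto f (𝓝[<] b) atTop := by
  refine tendsto_atTop.2 fun C ↦ ?_
  obtain ⟨_, ⟨t, ht, rfl⟩, hC⟩ := not_bddAbove_iff.1 h C
  filter_upwards [Ioo_mem_nhdsLT ht.2] with u hu
  exact hC.le.trans (hf ht ⟨ht.1.trans hu.1, hu.2⟩ hu.1.le)

theorem mul_sub_sq_le_of_le_largest_root {c s r p x : ℝ} (hc : 0 < c)
    (hroot : c * p ^ 2 - s * p + r = 0)
    (hlargest : ∀ z, c * z ^ 2 - s * z + r = 0 → z ≤ p) (hx : p ≤ x) :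
    c * (x - p) ^ 2 ≤ c * x ^ 2 - s * x + r := by
  set q := s / c - p
  have hfac : ∀ z, c * z ^ 2 - s * z + r = c * (z - p) * (z - q) := fun z ↦ by
    have hcq : c * q = s - c * p := by simp only [q]; field_simp
    linear_combination (z - p) * hcq + hroot
  have hq : q ≤ p := hlargest q (by rw [hfac]; ring)
  have : 0 ≤ c * (x - p) * (p - q) :=
    mul_nonneg (mul_nonneg hc.le (sub_nonneg.2 hx)) (sub_nonneg.2 hq)
  rw [hfac]
  linarith [show c * (x - p) * (x - q) = c * (x - p) ^ 2 + c * (x - p) * (p - q) by ring]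

theorem mul_sq_le_cubic_of_le_largest_root {c s r p y₀ x : ℝ} (hc : 0 < c) (hp : 0 ≤ p)
    (hroot : c * p ^ 2 - s * p + r = 0)
    (hlargest : ∀ z, c * z ^ 2 - s * z + r = 0 → z ≤ p) (hy₀ : p < y₀) (hx : y₀ ≤ x) :
    c * (y₀ - p) ^ 2 / y₀ * x ^ 2 ≤ c * x ^ 3 - s * x ^ 2 + r * x := by
  have hy₀pos : 0 < y₀ := hp.trans_lt hy₀
  have hxpos : 0 < x := hy₀pos.trans_le hx
  -- `(x - p) ^ 2 * y₀ - (y₀ - p) ^ 2 * x = (x - y₀) * (x * y₀ - p ^ 2) ≥ 0`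
  have hgrow : (y₀ - p) ^ 2 * x ≤ (x - p) ^ 2 * y₀ := by
    have : p ^ 2 ≤ x * y₀ := by nlinarith
    nlinarith [mul_nonneg (sub_nonneg.2 hx) (sub_nonneg.2 this)]
  calc c * (y₀ - p) ^ 2 / y₀ * x ^ 2 = c * x / y₀ * ((y₀ - p) ^ 2 * x) := by ring
    _ ≤ c * x / y₀ * ((x - p) ^ 2 * y₀) := by gcongr
    _ = x * (c * (x - p) ^ 2) := by field_simp
    _ ≤ x * (c * x ^ 2 - s * x + r) := by
      gcongr; exact mul_sub_sq_le_of_le_largest_root hc hroot hlargest (hy₀.le.trans hx)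
    _ = c * x ^ 3 - s * x ^ 2 + r * x := by ring

theorem cubic_ode_blowup_general (a r kmin kmax : ℝ)
    (ha : 0 < a) (hkmin : 0 < kmin) (hk : kmin < kmax)
    (xplus : ℝ) (hpos : 0 < xplus)
    (hroot : (a / kmax) * xplus ^ 2 - (r / kmin + a) * xplus + r = 0)
    (hlargest : ∀ z : ℝ, (a / kmax) * z ^ 2 - (r / kmin + a) * z + r = 0 → z ≤ xplus)
    (y0 : ℝ) (hy0 : xplus < y0) :
    (¬ ∃ y : ℝ → ℝ, y 0 = y0 ∧ CubicSolOn a r kmin kmax y (Set.Ici 0)) ∧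
    ∀ (Tstar : ℝ) (y : ℝ → ℝ), 0 < Tstar → y 0 = y0 →
      CubicSolOn a r kmin kmax y (Set.Ico 0 Tstar) →
      (¬ ∃ b : ℝ, Tstar < b ∧ ∃ z : ℝ → ℝ, z 0 = y0 ∧
          CubicSolOn a r kmin kmax z (Set.Ico 0 b) ∧
          ∀ t ∈ Set.Ico (0:ℝ) Tstar, z t = y t) →
      Filter.Tendsto y (nhdsWithin Tstar (Set.Iio Tstar)) Filter.atTop := by
  set F : ℝ → ℝ := fun x ↦ (a / kmax) * x ^ 3 - (r / kmin + a) * x ^ 2 + r * x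
  set μ := a / kmax * (y0 - xplus) ^ 2 / y0
  have hc : 0 < a / kmax := div_pos ha (hkmin.trans hk)
  have hy0pos : 0 < y0 := hpos.trans hy0
  have hμ : 0 < μ := by have := sub_pos.2 hy0; positivity
  have hF : ∀ x, y0 ≤ x → μ * x ^ 2 ≤ F x := fun x ↦
    mul_sq_le_cubic_of_le_largest_root hc hpos.le hroot hlargest hy0
  refine ⟨?_, ?_⟩
  · rintro ⟨y, rfl, hsol⟩
    have := AutonomousODE.lifetime_le_of_mul_sq_le (f := F) (T := (μ * y 0)⁻¹ + 1)
      (fun t ht ↦ (hsol t ht.1).mono Ico_subset_Ici_self) hμ hy0pos hF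
    linarith
  · rintro T y hT rfl hsol hmax
    have hmono : MonotoneOn y (Ioo 0 T) :=
      (AutonomousODE.monotoneOn_of_pos (f := F) hsol fun x hx ↦
        (mul_pos hμ (pow_pos (hy0pos.trans_le hx) 2)).trans_le (hF x hx)).mono
          Ioo_subset_Ico_self
    by_cases hbdd : BddAbove (y '' Ioo 0 T)
    · obtain ⟨b, hb, z, hz, hzy⟩ :=
        AutonomousODE.exists_extension_of_tendsto (f := F) hT hsol
          (hmono.tendsto_nhdsWithin_Ioo_left (nonempty_Ioo.2 hT) hbdd)
          (by fun_prop : ContDiff ℝ 1 F).contDiffAt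
      exact (hmax ⟨b, hb, z, hzy ⟨le_rfl, hT⟩, hz, hzy⟩).elim
    · exact hmono.tendsto_nhdsLT_atTop_of_not_bddAbove hbdd

/-- if `x₊` is the larger of the two positive roots of the
quadratic `(a/k_max)·X² − (r/k_min + a)·X + r` and `y(0) > x₊`, then any C¹
solution of `y′ = (a/k_max)·y³ − (r/k_min + a)·y² + r·y` blows up in finite
time: there is no solution on all of `[0, ∞)`, and on the maximal interval of
existence `[0, T*)` one has `T* < ∞` and `y(t) → +∞` as `t → T*⁻`. -/
theorem cubic_ode_blowup (a r kmin kmax : ℝ)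
    (ha : 0 < a) (hr : 0 < r) (hkmin : 0 < kmin) (hk : kmin < kmax)
    (xplus : ℝ) (hpos : 0 < xplus)
    (hroot : (a / kmax) * xplus ^ 2 - (r / kmin + a) * xplus + r = 0)
    (hlargest : ∀ z : ℝ, (a / kmax) * z ^ 2 - (r / kmin + a) * z + r = 0 → z ≤ xplus)
    (y0 : ℝ) (hy0 : xplus < y0) :
    (¬ ∃ y : ℝ → ℝ, y 0 = y0 ∧ CubicSolOn a r kmin kmax y (Set.Ici 0)) ∧
    ∀ (Tstar : ℝ) (y : ℝ → ℝ), 0 < Tstar → y 0 = y0 →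
      CubicSolOn a r kmin kmax y (Set.Ico 0 Tstar) →
      (¬ ∃ b : ℝ, Tstar < b ∧ ∃ z : ℝ → ℝ, z 0 = y0 ∧
          CubicSolOn a r kmin kmax z (Set.Ico 0 b) ∧
          ∀ t ∈ Set.Ico (0:ℝ) Tstar, z t = y t) →
      Filter.Tendsto y (nhdsWithin Tstar (Set.Iio Tstar)) Filter.atTop :=
  cubic_ode_blowup_general a r kmin kmax ha hkmin hk xplus hpos hroot hlargest y0 hy0
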